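/- Let f ∈ R = k[[x₁,…,xₙ]] (k of characteristic zero, n ≥ 2) define an isolated hypersurface singularity at the origin, and assume f is not quasihomogeneous (f ∉ J_f). Then μ_f − τ_f ≥ 2·e^BS(f) − 3. Consequently: (i) if μ_f − τ_f ≤ 2 then e^BS(f) = 2; and (ii) if μ_f − τ_f ≤ e^BS(f) − 1 then e^BS(f) = 2. -/

import Mathlib

noncomputable section

open MvPowerSeries

/-- Partial derivative `∂f/∂xᵢ` of a multivariate formal power series. -/
def psDeriv {k : Type*} [Field k] {n : ℕ} (i : Fin n)
    (f : MvPowerSeries (Fin n) k) : MvPowerSeries (Fin n) k :=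
  fun m => ((m i + 1 : ℕ) : k) * MvPowerSeries.coeff (R := k) (m + Finsupp.single i 1) f

variable (k : Type*) [Field k] [CharZero k] (n : ℕ)

/-- The maximal ideal `𝔪 = ⟨x₁,…,xₙ⟩` of `k[[x₁,…,xₙ]]`. -/
def psMax : Ideal (MvPowerSeries (Fin n) k) :=
  Ideal.span (Set.range (MvPowerSeries.X : Fin n → MvPowerSeries (Fin n) k))

variable {k n}

/-- The gradient ideal `J_f = ⟨∂f/∂x₁,…,∂f/∂xₙ⟩`. -/
def gradIdeal (f : MvPowerSeries (Fin n) k) : Ideal (MvPowerSeries (Fin n) k) :=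
  Ideal.span (Set.range fun i : Fin n => psDeriv i f)

/-- The Jacobian (Tjurina) ideal `I_f = J_f + ⟨f⟩`. -/
def jacIdeal (f : MvPowerSeries (Fin n) k) : Ideal (MvPowerSeries (Fin n) k) :=
  gradIdeal f + Ideal.span {f}

/-- `f` defines an isolated hypersurface singularity at the origin. -/
def IsIsolatedSing (f : MvPowerSeries (Fin n) k) : Prop :=
  f ∈ (psMax k n) ^ 2 ∧
    IsFiniteLength (MvPowerSeries (Fin n) k) (MvPowerSeries (Fin n) k ⧸ gradIdeal f)

/-- The length of a module: the supremum of the lengths of strict chains of submodules. -/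
def moduleLength (R M : Type*) [Ring R] [AddCommGroup M] [Module R M] : ℕ∞ :=
  ⨆ s : RelSeries {(a, b) : Submodule R M × Submodule R M | a < b}, (s.length : ℕ∞)

/-- The Milnor number `μ_f = λ(R/J_f)`. -/
def milnor (f : MvPowerSeries (Fin n) k) : ℕ∞ :=
  moduleLength (MvPowerSeries (Fin n) k) (MvPowerSeries (Fin n) k ⧸ gradIdeal f)

/-- The Tjurina number `τ_f = λ(R/I_f)`. -/
def tjurina (f : MvPowerSeries (Fin n) k) : ℕ∞ :=
  moduleLength (MvPowerSeries (Fin n) k) (MvPowerSeries (Fin n) k ⧸ jacIdeal f)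

/-- The Briançon–Skoda exponent `e^BS(f) = min {d ≥ 1 : f^d ∈ J_f}`. -/
def eBS (f : MvPowerSeries (Fin n) k) : ℕ :=
  sInf {d : ℕ | 1 ≤ d ∧ f ^ d ∈ gradIdeal f}

/-- `β_f = max {i ≥ 0 : (J_f : fⁱ) ⊆ I_f}`. -/
def betaMT (f : MvPowerSeries (Fin n) k) : ℕ :=
  sSup {i : ℕ | Submodule.colon (gradIdeal f) (Ideal.span {f ^ i}) ≤ jacIdeal f}

namespace SmallDiffAux

lemma length_le_moduleLength {R M : Type*} [Ring R] [AddCommGroup M] [Module R M]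
    (s : LTSeries (Submodule R M)) : (s.length : ℕ∞) ≤ moduleLength R M :=
  le_iSup (fun t : RelSeries {(a, b) : Submodule R M × Submodule R M | a < b} =>
    (t.length : ℕ∞)) s

/-- Extend a strict chain so that its last element becomes `x`, given `s.last ≤ x`. -/
lemma exists_extend {α : Type*} [PartialOrder α] (s : LTSeries α) (x : α) (h : s.last ≤ x) :
    ∃ t : LTSeries α, t.last = x ∧ s.length ≤ t.length := by
  rcases eq_or_lt_of_le h with h | h
  · exact ⟨s, h, le_rfl⟩
  · exact ⟨s.snoc x h, RelSeries.last_snoc s x h, by simp⟩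

/-- Two parallel monotone sequences where at each step at least one is strict give two
chains whose lengths add up appropriately. -/
lemma exists_two_chains {α β : Type*} [PartialOrder α] [PartialOrder β]
    (u : ℕ → α) (v : ℕ → β) (hu : Monotone u) (hv : Monotone v) (L : ℕ)
    (h : ∀ i, i < L → u i < u (i + 1) ∨ v i < v (i + 1)) :
    ∃ (su : LTSeries α) (sv : LTSeries β),
      su.last = u L ∧ sv.last = v L ∧ L ≤ su.length + sv.length := by
  induction L with
  | zero =>
      exact ⟨RelSeries.singleton _ (u 0), RelSeries.singleton _ (v 0),
        RelSeries.last_singleton _, RelSeries.last_singleton _, by omega⟩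
  | succ L ih =>
      obtain ⟨su, sv, hsu, hsv, hlen⟩ := ih (fun i hi => h i (by omega))
      rcases h L (by omega) with hst | hst
      · obtain ⟨sv', hsv', hlenv⟩ := exists_extend sv (v (L + 1)) (hsv ▸ hv (Nat.le_succ L))
        refine ⟨su.snoc (u (L + 1)) (hsu ▸ hst), sv', by simp, hsv', ?_⟩
        simp only [RelSeries.snoc_length]
        omega
      · obtain ⟨su', hsu', hlenu⟩ := exists_extend su (u (L + 1)) (hsu ▸ hu (Nat.le_succ L))
        refine ⟨su', sv.snoc (v (L + 1)) (hsv ▸ hst), hsu', by simp, ?_⟩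
        simp only [RelSeries.snoc_length]
        omega

variable {R M : Type*} [Ring R] [AddCommGroup M] [Module R M]

lemma moduleLength_le_add (N : Submodule R M) :
    moduleLength R M ≤ moduleLength R N + moduleLength R (M ⧸ N) := by
  refine iSup_le fun (s : LTSeries (Submodule R M)) => ?_
  set L := s.length with hL
  set s' : ℕ → Submodule R M := fun i => s ⟨min i L, by omega⟩ with hs'
  have hs'mono : Monotone s' := by
    intro i j hij
    exact LTSeries.monotone s (by simp [Fin.le_def]; omega)
  have hs'strict : ∀ i, i < L → s' i < s' (i + 1) := by
    intro i hi
    exact LTSeries.strictMono s (by simp [Fin.lt_def]; omega)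
  set u : ℕ → Submodule R N := fun i => Submodule.comap N.subtype (s' i) with hu
  set v : ℕ → Submodule R (M ⧸ N) := fun i => Submodule.map N.mkQ (s' i) with hv
  have humono : Monotone u := fun i j hij => Submodule.comap_mono (hs'mono hij)
  have hvmono : Monotone v := fun i j hij => Submodule.map_mono (hs'mono hij)
  have hdich : ∀ i, i < L → u i < u (i + 1) ∨ v i < v (i + 1) := by
    intro i hi
    have h2 := strictMono_inf_prod_sup (z := N) (hs'strict i hi)
    rw [Prod.lt_iff] at h2
    rcases h2 with ⟨h2, -⟩ | ⟨-, h2⟩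
    · left
      have h2' : s' i ⊓ N < s' (i + 1) ⊓ N := h2
      refine lt_of_le_of_ne (humono (Nat.le_succ i)) fun hEq => ?_
      have hmm := congrArg (Submodule.map N.subtype) hEq
      rw [Submodule.map_comap_subtype, Submodule.map_comap_subtype] at hmm
      rw [inf_comm N (s' i), inf_comm N (s' (i+1))] at hmm
      exact h2'.ne hmm
    · right
      have h2' : s' i ⊔ N < s' (i + 1) ⊔ N := h2
      refine lt_of_le_of_ne (hvmono (Nat.le_succ i)) fun hEq => ?_
      have hmm := congrArg (Submodule.comap N.mkQ) hEq
      rw [Submodule.comap_map_eq, Submodule.comap_map_eq, Submodule.ker_mkQ] at hmm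
      exact h2'.ne hmm
  obtain ⟨su, sv, -, -, hlen⟩ := exists_two_chains u v humono hvmono L hdich
  calc (s.length : ℕ∞) ≤ ((su.length + sv.length : ℕ) : ℕ∞) := by exact_mod_cast hlen
    _ ≤ moduleLength R N + moduleLength R (M ⧸ N) := by
        push_cast
        exact add_le_add (length_le_moduleLength su) (length_le_moduleLength sv)

lemma moduleLength_eq_zero_of_subsingleton [Subsingleton M] : moduleLength R M = 0 := by
  refine le_antisymm (iSup_le fun (s : LTSeries (Submodule R M)) => ?_) zero_le
  have : s.length = 0 := by
    by_contra hne
    have h1 : (0 : ℕ) < s.length := Nat.pos_of_ne_zero hne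
    have : s.toFun _ < s.toFun _ := s.step ⟨0, h1⟩
    exact this.ne (Subsingleton.elim _ _)
  simp [this]

lemma moduleLength_le_one_of_isSimple (h : IsSimpleModule R M) : moduleLength R M ≤ 1 := by
  refine iSup_le fun (s : LTSeries (Submodule R M)) => ?_
  have : s.length ≤ 1 := by
    by_contra hne
    push_neg at hne
    have h0 : s ⟨0, by omega⟩ < s ⟨1, by omega⟩ := LTSeries.strictMono s (by simp [Fin.lt_def])
    have h1 : s ⟨1, by omega⟩ < s ⟨2, by omega⟩ := LTSeries.strictMono s (by simp [Fin.lt_def])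
    rcases eq_bot_or_eq_top (s ⟨1, by omega⟩) with hb | ht
    · exact absurd (hb ▸ h0) (by simp)
    · exact absurd (ht ▸ h1) (by simp)
  exact_mod_cast this

lemma moduleLength_ne_top_of_isFiniteLength (h : IsFiniteLength R M) :
    moduleLength R M ≠ ⊤ := by
  induction h with
  | of_subsingleton => simp [moduleLength_eq_zero_of_subsingleton]
  | @of_simple_quotient M _ _ N _ _ ih =>
      intro htop
      have h1 := moduleLength_le_add (M := M) N
      have h2 : moduleLength R (M ⧸ N) ≤ 1 := moduleLength_le_one_of_isSimple ‹_›
      rw [htop] at h1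
      have : (⊤ : ℕ∞) ≤ moduleLength R N + 1 := le_trans h1 (add_le_add_right h2 _)
      have hfin : moduleLength R N + 1 ≠ ⊤ := by
        intro hc
        exact ih ((WithTop.add_eq_top.mp hc).resolve_right ENat.one_ne_top)
      exact hfin (top_le_iff.mp this)


set_option maxHeartbeats 1000000 in
/-- The core inequality, in an abstract commutative ring. -/
lemma core {R : Type*} [CommRing R] {m J I : Ideal R} {f : R}
    (hm : m ≤ Ideal.jacobson ⊥) (hfm : f ∈ m • m) (hJI : J ≤ I) (hfI : f ∈ I)
    (hfin : IsFiniteLength R (R ⧸ J)) (hq : f ∉ J) :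
    2 ≤ sInf {d : ℕ | 1 ≤ d ∧ f ^ d ∈ J} ∧
    ((2 * sInf {d : ℕ | 1 ≤ d ∧ f ^ d ∈ J} - 3 : ℕ) : ℕ∞) ≤
      moduleLength R (R ⧸ J) - moduleLength R (R ⧸ I) := by
  classical
  -- the cyclic submodules D i = span of the class of f^i in R/J
  set D : ℕ → Submodule R (R ⧸ J) :=
    fun i => Submodule.span R {Submodule.Quotient.mk (f ^ i)} with hD
  have hfm' : f ∈ m := by
    have : m • m ≤ m := Submodule.smul_le_right
    exact this hfm
  have hmem : ∀ i, (Submodule.Quotient.mk (f ^ i) : R ⧸ J) ∈ D i :=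
    fun i => Submodule.mem_span_singleton_self _
  have hbot : ∀ i, D i = ⊥ ↔ f ^ i ∈ J := by
    intro i
    rw [hD]
    rw [Submodule.span_singleton_eq_bot, Submodule.Quotient.mk_eq_zero]
  have hmk_succ : ∀ i, (Submodule.Quotient.mk (f ^ (i + 1)) : R ⧸ J)
      = f • Submodule.Quotient.mk (f ^ i) := by
    intro i
    rw [← Submodule.Quotient.mk_smul, smul_eq_mul, ← pow_succ']
  have hD2 : ∀ i, D (i + 1) ≤ m • (m • D i) := by
    intro i
    rw [hD, Submodule.span_le, Set.singleton_subset_iff]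
    have : (Submodule.Quotient.mk (f ^ (i + 1)) : R ⧸ J) ∈ (m • m) • D i := by
      rw [hmk_succ]
      exact Submodule.smul_mem_smul hfm (hmem i)
    rwa [Submodule.smul_assoc] at this
  have hD1 : ∀ i, D (i + 1) ≤ m • D i :=
    fun i => (hD2 i).trans (smul_mono_right m Submodule.smul_le_right)
  have hfg : ∀ i, (D i).FG := fun i => Submodule.fg_span_singleton _
  have hNAK : ∀ {N P : Submodule R (R ⧸ J)}, N.FG → N ≤ P ⊔ m • N → N ≤ P :=
    fun fg h => Submodule.le_of_le_smul_of_le_jacobson_bot fg hm h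
  have key0 : ∀ i, D i ≤ m • D i → f ^ i ∈ J := by
    intro i h
    have : D i ≤ ⊥ := hNAK (hfg i) (by rwa [bot_sup_eq])
    exact (hbot i).mp (le_bot_iff.mp this)
  -- existence of some power of f in J
  obtain ⟨hNoe, hArt⟩ := isFiniteLength_iff_isNoetherian_isArtinian.mp hfin
  have hDanti : ∀ i j : ℕ, i ≤ j → D j ≤ D i := by
    intro i j hij
    rw [hD, Submodule.span_le, Set.singleton_subset_iff]
    have : f ^ j = f ^ (j - i) * f ^ i := by rw [← pow_add]; congr 1; omega
    rw [this]
    have := hmem i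
    have h2 : (Submodule.Quotient.mk (f ^ (j - i) * f ^ i) : R ⧸ J)
        = (f ^ (j - i)) • Submodule.Quotient.mk (f ^ i) := by
      rw [← Submodule.Quotient.mk_smul]; rfl
    rw [SetLike.mem_coe, h2]
    exact Submodule.smul_mem _ _ (hmem i)
  have hSne : {d : ℕ | 1 ≤ d ∧ f ^ d ∈ J}.Nonempty := by
    haveI := hArt
    have hg : Monotone (fun i : ℕ => OrderDual.toDual (D (i + 1))) := by
      intro i j hij
      show D (j + 1) ≤ D (i + 1)
      exact hDanti (i + 1) (j + 1) (by omega)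
    obtain ⟨N, hN⟩ := IsArtinian.monotone_stabilizes (R := R) (M := R ⧸ J)
      ⟨fun i : ℕ => OrderDual.toDual (D (i + 1)), hg⟩
    have hEq : D (N + 1) = D (N + 2) := congrArg OrderDual.ofDual (hN (N + 1) (by omega))
    refine ⟨N + 1, by omega, key0 (N + 1) ?_⟩
    calc D (N + 1) = D (N + 2) := hEq
      _ ≤ m • D (N + 1) := hD1 (N + 1)
  set e := sInf {d : ℕ | 1 ≤ d ∧ f ^ d ∈ J} with he
  obtain ⟨he1, hepow⟩ := Nat.sInf_mem hSne
  rw [← he] at he1 hepow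
  have hlt : ∀ d, 1 ≤ d → d < e → f ^ d ∉ J := by
    intro d h1 hd hmem'
    have hle := Nat.sInf_le (show d ∈ {d : ℕ | 1 ≤ d ∧ f ^ d ∈ J} from ⟨h1, hmem'⟩)
    rw [← he] at hle
    omega
  have he2 : 2 ≤ e := by
    by_contra h
    have h1 : e = 1 := by omega
    rw [h1, pow_one] at hepow
    exact hq hepow
  refine ⟨he2, ?_⟩
  -- the two step lemmas
  have hstep1 : ∀ i, f ^ (i + 1) ∉ J → D (i + 1) < m • D i ⊔ D (i + 1) := by
    intro i hni
    refine lt_of_le_of_ne le_sup_right fun hEq => ?_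
    have hsub : m • D i ≤ D (i + 1) := hEq ▸ le_sup_left
    refine hni (key0 (i + 1) ?_)
    exact (hD2 i).trans (smul_mono_right m hsub)
  have hstep2 : ∀ i, f ^ i ∉ J → m • D i ⊔ D (i + 1) < D i := by
    intro i hni
    refine lt_of_le_of_ne (sup_le Submodule.smul_le_right
      ((hD1 i).trans Submodule.smul_le_right)) fun hEq => ?_
    refine hni (key0 i ?_)
    calc D i = m • D i ⊔ D (i + 1) := hEq.symm
      _ ≤ m • D i := sup_le le_rfl (hD1 i)
  -- build the chain of length 2e-3 ending at D 1
  have CH : ∀ t : ℕ, t ≤ e - 2 → ∃ s : LTSeries (Submodule R (R ⧸ J)),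
      s.last = D (e - 1 - t) ∧ s.length = 2 * t + 1 := by
    intro t
    induction t with
    | zero =>
        intro _
        have hne : f ^ (e - 1) ∉ J := hlt (e - 1) (by omega) (by omega)
        have : (⊥ : Submodule R (R ⧸ J)) < D (e - 1) := by
          rcases eq_bot_or_bot_lt (D (e - 1)) with h | h
          · exact absurd ((hbot _).mp h) hne
          · exact h
        exact ⟨(RelSeries.singleton _ ⊥).snoc (D (e - 1))
            (by rw [RelSeries.last_singleton]; exact this),
          by simp, by simp⟩
    | succ t ih =>
        intro ht
        obtain ⟨s, hslast, hslen⟩ := ih (by omega)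
        set i := e - 1 - (t + 1) with hi
        have hi1 : 1 ≤ i := by omega
        have hieq : e - 1 - t = i + 1 := by omega
        have hni : f ^ i ∉ J := hlt i hi1 (by omega)
        have hni' : f ^ (i + 1) ∉ J := hlt (i + 1) (by omega) (by omega)
        have h1 : s.last < m • D i ⊔ D (i + 1) := by
          rw [hslast, hieq]; exact hstep1 i hni'
        have h2 : (s.snoc _ h1).last < D i := by
          rw [RelSeries.last_snoc]; exact hstep2 i hni
        exact ⟨(s.snoc _ h1).snoc (D i) h2, by simp, by simp [hslen]; omega⟩
  obtain ⟨s, hslast, hslen⟩ := CH (e - 2) le_rfl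
  have hslast1 : s.last = D 1 := by rw [hslast]; congr 1; omega
  have hslen1 : s.length = 2 * e - 3 := by omega
  -- the comparison map to R/I
  set φ : (R ⧸ J) →ₗ[R] (R ⧸ I) := Submodule.mapQ J I LinearMap.id (by simpa using hJI) with hφ
  have hφsurj : Function.Surjective φ := by
    intro b
    obtain ⟨x, rfl⟩ := Submodule.Quotient.mk_surjective I b
    exact ⟨Submodule.Quotient.mk x, by rw [hφ, Submodule.mapQ_apply]; rfl⟩
  have hφstrict : StrictMono (Submodule.comap φ) := by
    refine Monotone.strictMono_of_injective (fun X Y hXY => Submodule.comap_mono hXY)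
      fun X Y hXY => ?_
    have := congrArg (Submodule.map φ) hXY
    rwa [Submodule.map_comap_eq_of_surjective hφsurj,
      Submodule.map_comap_eq_of_surjective hφsurj] at this
  have hD1ker : D 1 ≤ LinearMap.ker φ := by
    rw [hD, Submodule.span_le, Set.singleton_subset_iff, SetLike.mem_coe, LinearMap.mem_ker,
      hφ, pow_one, Submodule.mapQ_apply]
    exact (Submodule.Quotient.mk_eq_zero I).mpr (by simpa using hfI)
  -- key inequality: for every chain t' in R/I, (2e-3) + t'.length ≤ moduleLength (R/J)
  have key : ∀ t' : LTSeries (Submodule R (R ⧸ I)),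
      ((2 * e - 3 + t'.length : ℕ) : ℕ∞) ≤ moduleLength R (R ⧸ J) := by
    intro t'
    set tc : LTSeries (Submodule R (R ⧸ J)) := t'.map (Submodule.comap φ) hφstrict with htc
    have hconn : s.last ≤ tc.head := by
      rw [hslast1]
      refine hD1ker.trans ?_
      have : LinearMap.ker φ = Submodule.comap φ ⊥ := rfl
      rw [this]
      exact Submodule.comap_mono bot_le
    have htclen : tc.length = t'.length := rfl
    rcases eq_or_lt_of_le hconn with h | h
    · have := length_le_moduleLength (s.smash tc h)
      have hlen : (s.smash tc h).length = 2 * e - 3 + t'.length := by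
        show s.length + tc.length = _
        omega
      rwa [hlen] at this
    · have := length_le_moduleLength (s.append tc h)
      have hlen : (s.append tc h).length = s.length + tc.length + 1 := RelSeries.append_length _ _ _
      rw [hlen] at this
      refine le_trans ?_ this
      have : 2 * e - 3 + t'.length ≤ s.length + tc.length + 1 := by omega
      exact_mod_cast this
  -- conclude with arithmetic in ℕ∞
  have hμtop : moduleLength R (R ⧸ J) ≠ ⊤ := moduleLength_ne_top_of_isFiniteLength hfin
  set a : ℕ := (moduleLength R (R ⧸ J)).toNat with ha'
  have ha : (a : ℕ∞) = moduleLength R (R ⧸ J) := ENat.coe_toNat hμtop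
  set c := 2 * e - 3 with hc
  have hkey' : ∀ t' : LTSeries (Submodule R (R ⧸ I)), c + t'.length ≤ a := by
    intro t'
    have := key t'
    rw [← ha] at this
    exact_mod_cast this
  have hca : c ≤ a := by
    have := hkey' (RelSeries.singleton _ ⊥)
    simpa using this.trans (by omega)
  have hτ : moduleLength R (R ⧸ I) ≤ ((a - c : ℕ) : ℕ∞) := by
    refine iSup_le fun (t' : LTSeries (Submodule R (R ⧸ I))) => ?_
    have := hkey' t'
    exact_mod_cast Nat.le_sub_of_add_le (by omega)
  have hτtop : moduleLength R (R ⧸ I) ≠ ⊤ :=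
    ne_top_of_le_ne_top (WithTop.coe_ne_top) hτ
  set b : ℕ := (moduleLength R (R ⧸ I)).toNat with hb'
  have hb : (b : ℕ∞) = moduleLength R (R ⧸ I) := ENat.coe_toNat hτtop
  have hba : b ≤ a - c := by
    rw [← hb] at hτ
    exact_mod_cast hτ
  rw [← ha, ← hb, ← ENat.coe_sub]
  exact_mod_cast (by omega : c ≤ a - b)

end SmallDiffAux

/-- If `f` is an isolated hypersurface singularity which is not
quasihomogeneous, then `μ_f − τ_f ≥ 2·e^BS(f) − 3`; consequently, if `μ_f − τ_f ≤ 2`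
then `e^BS(f) = 2`, and if `μ_f − τ_f ≤ e^BS(f) − 1` then `e^BS(f) = 2`. -/
theorem small_difference (hn : 2 ≤ n) (f : MvPowerSeries (Fin n) k)
    (hf : IsIsolatedSing f) (hq : f ∉ gradIdeal f) :
    ((2 * eBS f - 3 : ℕ) : ℕ∞) ≤ milnor f - tjurina f ∧
      (milnor f - tjurina f ≤ 2 → eBS f = 2) ∧
      (milnor f - tjurina f ≤ ((eBS f - 1 : ℕ) : ℕ∞) → eBS f = 2) := by
  obtain ⟨hf2, hfin⟩ := hf
  have hm : psMax k n ≤ Ideal.jacobson ⊥ := by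
    refine le_trans ?_ (IsLocalRing.maximalIdeal_le_jacobson _)
    rw [psMax, Ideal.span_le]
    rintro x ⟨i, rfl⟩
    rw [SetLike.mem_coe, IsLocalRing.mem_maximalIdeal, mem_nonunits_iff]
    intro hu
    have h0 := MvPowerSeries.isUnit_iff_constantCoeff.mp hu
    rw [MvPowerSeries.constantCoeff_X] at h0
    exact not_isUnit_zero h0
  have hfm : f ∈ psMax k n • psMax k n := by
    rw [Ideal.smul_eq_mul, ← pow_two]
    exact hf2
  have hJI : gradIdeal f ≤ jacIdeal f := by
    rw [jacIdeal, Submodule.add_eq_sup]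
    exact le_sup_left
  have hfI : f ∈ jacIdeal f := by
    rw [jacIdeal, Submodule.add_eq_sup]
    exact (le_sup_right : Ideal.span {f} ≤ _) (Ideal.mem_span_singleton_self f)
  obtain ⟨he2, hmain⟩ := SmallDiffAux.core hm hfm hJI hfI hfin hq
  have he2' : 2 ≤ eBS f := he2
  have hmain' : ((2 * eBS f - 3 : ℕ) : ℕ∞) ≤ milnor f - tjurina f := hmain
  refine ⟨hmain', fun h => ?_, fun h => ?_⟩
  · have h2 : ((2 * eBS f - 3 : ℕ) : ℕ∞) ≤ ((2 : ℕ) : ℕ∞) := le_trans hmain' (by exact_mod_cast h)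
    have h3 : 2 * eBS f - 3 ≤ 2 := by exact_mod_cast h2
    omega
  · have h2 : ((2 * eBS f - 3 : ℕ) : ℕ∞) ≤ ((eBS f - 1 : ℕ) : ℕ∞) := le_trans hmain' h
    have h3 : 2 * eBS f - 3 ≤ eBS f - 1 := by exact_mod_cast h2
    omega

end
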